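/- Let (Ω, P, π) be a finite irreducible reversible Markov chain with relaxation time t_rel, and let A ⊆ Ω be nonempty. Then for every t ≥ 0, P_π[T_A > t] ≤ (1 - π(A))·exp(-t·π(A)/t_rel), where T_A is the hitting time of A and the chain is started from stationarity π. -/

import Mathlib

open Finset

/-- `survSet P A t x = P_x[T_A > t]`: the probability, starting from `x`, of not
having visited the set `A` by time `t`. -/
noncomputable def survSet {Ω : Type*} [Fintype Ω] [DecidableEq Ω]
    (P : Matrix Ω Ω ℝ) (A : Finset Ω) : ℕ → Ω → ℝ
  | 0, x => if x ∈ A then 0 else 1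
  | (t + 1), x => if x ∈ A then 0 else ∑ y, P x y * survSet P A t y

/-!
Conjugating by `√π` turns `P` into a symmetric operator `S` on `ℓ²(Ω)` fixing the unit vector
`u = √π`, and killing the chain on `A` becomes compression by the coordinate projection `Q` onto
vectors vanishing on `A`: the survival function at time `t` embeds as `(QSQ)ᵗ Qu`.
For `w = Qw`, the component `⟪u, w⟫ = ⟪Qu, w⟫` has square at most `(1 - π(A)) ‖w‖²`; bounding the
rest of `w` by `λ₂`, and all of `w` from below by `λ_min`, gives
`|⟪Sw, w⟫| ≤ (1 - (1 - λ) π(A)) ‖w‖²` with `λ = max λ₂ |λ_min|`. For the symmetric operator `QSQ`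
this bound on the quadratic form bounds the norm, so
`P_π[T_A > t] = ⟪Qu, (QSQ)ᵗ Qu⟫ ≤ (1 - π(A)) (1 - (1 - λ) π(A))ᵗ ≤ (1 - π(A)) e^{-t π(A) / t_rel}`.
-/

open Matrix Module.End RealInnerProductSpace

namespace LinearMap

variable {E : Type*} [NormedAddCommGroup E] [InnerProductSpace ℝ E] {T Q : E →ₗ[ℝ] E}

theorem IsSymmetricProjection.norm_apply_le (hQ : Q.IsSymmetricProjection) (v : E) :
    ‖Q v‖ ≤ ‖v‖ := by
  have hQQ : Q (Q v) = Q v := congrArg (· v) hQ.isIdempotentElem.eq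
  rcases (norm_nonneg (Q v)).eq_or_lt with h | h
  · rw [← h]; exact norm_nonneg v
  refine le_of_mul_le_mul_left ?_ h
  calc ‖Q v‖ * ‖Q v‖ = ⟪Q v, v⟫ := by
        rw [← real_inner_self_eq_norm_mul_norm, hQ.isSymmetric, hQQ, real_inner_comm]
    _ ≤ ‖Q v‖ * ‖v‖ := real_inner_le_norm _ _

namespace IsSymmetric

theorem mul_norm_sq_le_inner_map_self [FiniteDimensional ℝ E] (hT : T.IsSymmetric) {m : ℝ}
    (hm : ∀ μ, HasEigenvalue T μ → m ≤ μ) (v : E) : m * ‖v‖ ^ 2 ≤ ⟪T v, v⟫ := by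
  rcases eq_or_ne v 0 with rfl | hv
  · simp
  have : Nontrivial E := ⟨v, 0, hv⟩
  have hbdd : BddBelow (Set.range fun x : {x : E // x ≠ 0} => ⟪T x, x⟫ / ‖(x : E)‖ ^ 2) := by
    refine ⟨-‖LinearMap.toContinuousLinearMap T‖, ?_⟩
    rintro _ ⟨x, rfl⟩
    exact (abs_le.mp ((LinearMap.toContinuousLinearMap T).rayleighQuotient_le_norm x)).1
  have hmin := hm _ hT.hasEigenvalue_iInf_of_finiteDimensional
  have hle := ciInf_le hbdd ⟨v, hv⟩
  have hpos : 0 < ‖v‖ ^ 2 := by positivity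
  simp only [RCLike.re_to_real, RCLike.ofReal_real_eq_id] at hmin
  rw [le_div_iff₀ hpos] at hle
  exact (mul_le_mul_of_nonneg_right hmin hpos.le).trans hle

theorem inner_map_self_le_mul_norm_sq [FiniteDimensional ℝ E] (hT : T.IsSymmetric) {M : ℝ}
    (hM : ∀ μ, HasEigenvalue T μ → μ ≤ M) (v : E) : ⟪T v, v⟫ ≤ M * ‖v‖ ^ 2 := by
  have hneg : (-T).IsSymmetric := fun x y => by simp [inner_neg_left, inner_neg_right, hT x y]
  have key := hneg.mul_norm_sq_le_inner_map_self (m := -M) (fun μ hμ => by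
    obtain ⟨w, hw⟩ := hμ.exists_hasEigenvector
    have : HasEigenvalue T (-μ) := hasEigenvalue_of_hasEigenvector (x := w)
      ⟨mem_eigenspace_iff.mpr (by simpa [neg_smul] using congrArg Neg.neg hw.apply_eq_smul), hw.2⟩
    linarith [hM _ this]) v
  simp only [LinearMap.neg_apply, inner_neg_left] at key
  linarith

theorem inner_map_self_le_mul_norm_sq_of_mem [FiniteDimensional ℝ E] {V : Submodule ℝ E}
    (hT : T.IsSymmetric) (hV : ∀ v ∈ V, T v ∈ V) {M : ℝ}
    (hM : ∀ μ v, v ∈ V → v ≠ 0 → T v = μ • v → μ ≤ M) {v : E} (hv : v ∈ V) :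
    ⟪T v, v⟫ ≤ M * ‖v‖ ^ 2 := by
  refine (hT.restrict_invariant hV).inner_map_self_le_mul_norm_sq (fun μ hμ => ?_) ⟨v, hv⟩
  obtain ⟨w, hw⟩ := hμ.exists_hasEigenvector
  exact hM μ w w.2 (by simpa using hw.2) (by simpa using congrArg Subtype.val hw.apply_eq_smul)

theorem norm_map_le_of_abs_inner_map_self_le [FiniteDimensional ℝ E] (hT : T.IsSymmetric)
    {β : ℝ} (hβ : 0 ≤ β) (h : ∀ v, |⟪T v, v⟫| ≤ β * ‖v‖ ^ 2) (v : E) : ‖T v‖ ≤ β * ‖v‖ := by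
  set T' := LinearMap.toContinuousLinearMap T
  have hnorm : ‖T'‖ ≤ β := by
    rw [T'.norm_eq_iSup_rayleighQuotient hT]
    refine ciSup_le fun x => ?_
    rcases eq_or_ne x 0 with rfl | hx
    · simpa using hβ
    have hpos : 0 < ‖x‖ ^ 2 := by positivity
    rw [ContinuousLinearMap.rayleighQuotient, abs_div, abs_of_pos hpos, div_le_iff₀ hpos]
    exact h x
  calc ‖T v‖ = ‖T' v‖ := rfl
    _ ≤ ‖T'‖ * ‖v‖ := T'.le_opNorm v
    _ ≤ β * ‖v‖ := by gcongr

theorem inner_map_self_le_of_map_eq_self (hT : T.IsSymmetric) {u : E} (hu : ‖u‖ = 1)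
    (hTu : T u = u) {M : ℝ} (hM : ∀ g, ⟪u, g⟫ = 0 → ⟪T g, g⟫ ≤ M * ‖g‖ ^ 2) (w : E) :
    ⟪T w, w⟫ ≤ M * ‖w‖ ^ 2 + (1 - M) * ⟪u, w⟫ ^ 2 := by
  set c := ⟪u, w⟫
  set g := w - c • u
  have huu : ⟪u, u⟫ = 1 := by rw [real_inner_self_eq_norm_sq, hu, one_pow]
  have hug : ⟪u, g⟫ = 0 := by simp [g, c, inner_sub_right, inner_smul_right, hu]
  have hgu : ⟪g, u⟫ = 0 := by rw [real_inner_comm, hug]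
  have hTgu : ⟪T g, u⟫ = 0 := by rw [hT, hTu, hgu]
  have hw : w = g + c • u := by simp [g]
  have hnorm : ‖w‖ ^ 2 = ‖g‖ ^ 2 + c ^ 2 := by
    rw [← real_inner_self_eq_norm_sq, ← real_inner_self_eq_norm_sq, hw]
    simp only [inner_add_left, inner_add_right, inner_smul_left, inner_smul_right, hug, hgu, huu,
      conj_trivial]
    ring
  have hquad : ⟪T w, w⟫ = ⟪T g, g⟫ + c ^ 2 := by
    rw [hw, map_add, map_smul, hTu]
    simp only [inner_add_left, inner_add_right, inner_smul_left, inner_smul_right, hug,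
      hTgu, huu, conj_trivial]
    ring
  rw [hquad, hnorm]
  linarith [hM g hug]

theorem norm_compression_apply_le [FiniteDimensional ℝ E] (hT : T.IsSymmetric)
    (hQ : Q.IsSymmetricProjection) {β : ℝ} (hβ : 0 ≤ β)
    (h : ∀ w, Q w = w → |⟪T w, w⟫| ≤ β * ‖w‖ ^ 2) {w : E} (hw : Q w = w) :
    ‖Q (T w)‖ ≤ β * ‖w‖ := by
  have hQQ : ∀ v, Q (Q v) = Q v := fun v => congrArg (· v) hQ.isIdempotentElem.eq
  have hK : (Q ∘ₗ T ∘ₗ Q).IsSymmetric := fun x y => by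
    simp only [LinearMap.comp_apply]
    rw [hQ.isSymmetric, hT, hQ.isSymmetric]
  have := hK.norm_map_le_of_abs_inner_map_self_le hβ (fun v => ?_) w
  · simpa [hw] using this
  calc |⟪Q (T (Q v)), v⟫| = |⟪T (Q v), Q v⟫| := by rw [hQ.isSymmetric]
    _ ≤ β * ‖Q v‖ ^ 2 := h _ (hQQ v)
    _ ≤ β * ‖v‖ ^ 2 := by gcongr; exact hQ.norm_apply_le v

end IsSymmetric
end LinearMap

section ReversibleChain

variable {Ω : Type*}

noncomputable def weightedEmbed (π f : Ω → ℝ) : EuclideanSpace ℝ Ω :=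
  WithLp.toLp 2 fun x => √(π x) * f x

@[simp]
theorem weightedEmbed_apply (π f : Ω → ℝ) (x : Ω) : weightedEmbed π f x = √(π x) * f x := rfl

theorem weightedEmbed_injective {π : Ω → ℝ} (hπ : ∀ x, 0 < π x) :
    Function.Injective (weightedEmbed π) := fun f g h => funext fun x => by
  have := congrArg (· x) h
  simpa [(Real.sqrt_pos.mpr (hπ x)).ne'] using this

theorem weightedEmbed_div_sqrt {π : Ω → ℝ} (hπ : ∀ x, 0 < π x) (v : EuclideanSpace ℝ Ω) :
    weightedEmbed π (fun x => v x / √(π x)) = v := by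
  ext x
  simp [mul_div_cancel₀ _ (Real.sqrt_pos.mpr (hπ x)).ne']

variable [Fintype Ω]

theorem abs_le_one_of_mulVec_eq_smul {P : Matrix Ω Ω ℝ} (hP0 : ∀ x y, 0 ≤ P x y)
    (hP1 : ∀ x, ∑ y, P x y = 1) {r : ℝ} {f : Ω → ℝ} (hf : f ≠ 0) (h : P *ᵥ f = r • f) :
    |r| ≤ 1 := by
  obtain ⟨z, hz⟩ := Function.ne_iff.mp hf
  obtain ⟨x, -, hx⟩ := Finset.exists_max_image univ (fun y => |f y|) ⟨z, mem_univ z⟩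
  have hfx : 0 < |f x| := (abs_pos.mpr hz).trans_le (hx z (mem_univ z))
  refine le_of_mul_le_mul_right ?_ hfx
  calc |r| * |f x| = |∑ y, P x y * f y| := by
        rw [← abs_mul, ← smul_eq_mul, ← Pi.smul_apply, ← h]; rfl
    _ ≤ ∑ y, P x y * |f y| := by
        refine (abs_sum_le_sum_abs _ _).trans_eq (sum_congr rfl fun y _ => ?_)
        rw [abs_mul, abs_of_nonneg (hP0 x y)]
    _ ≤ ∑ y, P x y * |f x| :=
        sum_le_sum fun y _ => mul_le_mul_of_nonneg_left (hx y (mem_univ y)) (hP0 x y)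
    _ = 1 * |f x| := by rw [← sum_mul, hP1]

theorem inner_weightedEmbed {π : Ω → ℝ} (hπ : ∀ x, 0 ≤ π x) (f g : Ω → ℝ) :
    ⟪weightedEmbed π f, weightedEmbed π g⟫ = ∑ x, π x * f x * g x := by
  simp only [PiLp.inner_apply, weightedEmbed_apply, RCLike.inner_apply, conj_trivial]
  refine sum_congr rfl fun x _ => ?_
  linear_combination (f x * g x) * Real.mul_self_sqrt (hπ x)

variable [DecidableEq Ω]

noncomputable def symmetrizedOp (P : Matrix Ω Ω ℝ) (π : Ω → ℝ) :
    EuclideanSpace ℝ Ω →ₗ[ℝ] EuclideanSpace ℝ Ω :=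
  Matrix.toEuclideanLin (Matrix.of fun x y => √(π x) * P x y / √(π y))

theorem symmetrizedOp_weightedEmbed {π : Ω → ℝ} (hπ : ∀ x, 0 < π x) (P : Matrix Ω Ω ℝ)
    (f : Ω → ℝ) : symmetrizedOp P π (weightedEmbed π f) = weightedEmbed π (P *ᵥ f) := by
  ext x
  simp only [symmetrizedOp, Matrix.toLpLin_apply, Matrix.mulVec, dotProduct, weightedEmbed,
    Matrix.of_apply, mul_sum]
  refine sum_congr rfl fun y _ => ?_
  have := (Real.sqrt_pos.mpr (hπ y)).ne'
  field_simp

theorem isSymmetric_symmetrizedOp {P : Matrix Ω Ω ℝ} {π : Ω → ℝ} (hπ : ∀ x, 0 < π x)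
    (hrev : ∀ x y, π x * P x y = π y * P y x) : (symmetrizedOp P π).IsSymmetric := by
  refine Matrix.isSymmetric_toEuclideanLin_iff.mpr (Matrix.IsHermitian.ext fun x y => ?_)
  have hx := (Real.sqrt_pos.mpr (hπ x)).ne'
  have hy := (Real.sqrt_pos.mpr (hπ y)).ne'
  simp only [Matrix.of_apply, star_trivial]
  rw [div_eq_div_iff hx hy]
  linear_combination P y x * Real.mul_self_sqrt (hπ y).le - P x y * Real.mul_self_sqrt (hπ x).le
    + hrev y x

theorem exists_eigenfunction_of_symmetrizedOp {P : Matrix Ω Ω ℝ} {π : Ω → ℝ}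
    (hπ : ∀ x, 0 < π x) {μ : ℝ} {v : EuclideanSpace ℝ Ω} (hv : v ≠ 0)
    (h : symmetrizedOp P π v = μ • v) :
    ∃ f : Ω → ℝ, f ≠ 0 ∧ weightedEmbed π f = v ∧ P *ᵥ f = μ • f := by
  set f : Ω → ℝ := fun x => v x / √(π x)
  have hf : weightedEmbed π f = v := weightedEmbed_div_sqrt hπ v
  refine ⟨f, fun h0 => hv ?_, hf, weightedEmbed_injective hπ ?_⟩
  · rw [← hf, h0]; ext; simp
  · rw [← symmetrizedOp_weightedEmbed hπ, hf, h, ← hf]; ext; simp [mul_left_comm]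

theorem mul_norm_sq_le_inner_symmetrizedOp {P : Matrix Ω Ω ℝ} {π : Ω → ℝ}
    (hπ : ∀ x, 0 < π x) (hrev : ∀ x y, π x * P x y = π y * P y x) {m : ℝ}
    (hm : m ∈ lowerBounds {r : ℝ | ∃ f : Ω → ℝ, f ≠ 0 ∧ P *ᵥ f = r • f})
    (v : EuclideanSpace ℝ Ω) : m * ‖v‖ ^ 2 ≤ ⟪symmetrizedOp P π v, v⟫ := by
  refine (isSymmetric_symmetrizedOp hπ hrev).mul_norm_sq_le_inner_map_self (fun μ hμ => ?_) v
  obtain ⟨w, hw⟩ := hμ.exists_hasEigenvector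
  obtain ⟨f, hf, -, hPf⟩ := exists_eigenfunction_of_symmetrizedOp hπ hw.2 hw.apply_eq_smul
  exact hm ⟨f, hf, hPf⟩

theorem inner_symmetrizedOp_le {P : Matrix Ω Ω ℝ} {π : Ω → ℝ} (hP1 : ∀ x, ∑ y, P x y = 1)
    (hπ : ∀ x, 0 < π x) (hπ1 : ∑ x, π x = 1) (hrev : ∀ x y, π x * P x y = π y * P y x)
    {M : ℝ} (hM : M ∈ upperBounds {r : ℝ | ∃ f : Ω → ℝ, f ≠ 0 ∧ (∑ v, π v * f v) = 0 ∧
      P *ᵥ f = r • f})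
    (w : EuclideanSpace ℝ Ω) :
    ⟪symmetrizedOp P π w, w⟫ ≤ M * ‖w‖ ^ 2 + (1 - M) * ⟪weightedEmbed π 1, w⟫ ^ 2 := by
  set S := symmetrizedOp P π
  set u := weightedEmbed π 1
  have hS := isSymmetric_symmetrizedOp hπ hrev
  have hu : ‖u‖ = 1 := by
    refine (pow_eq_one_iff_of_nonneg (norm_nonneg u) two_ne_zero).mp ?_
    rw [← real_inner_self_eq_norm_sq, inner_weightedEmbed fun x => (hπ x).le]
    simpa using hπ1
  have hSu : S u = u := by
    rw [symmetrizedOp_weightedEmbed hπ]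
    congr 1; ext x; simp [mulVec, dotProduct, hP1]
  have hmem : ∀ v, v ∈ (ℝ ∙ u)ᗮ ↔ ⟪u, v⟫ = 0 := fun v =>
    Submodule.mem_orthogonal_singleton_iff_inner_right
  refine hS.inner_map_self_le_of_map_eq_self hu hSu (fun g hg => ?_) w
  refine hS.inner_map_self_le_mul_norm_sq_of_mem (fun v hv => ?_) (fun μ v hv hv0 hSv => ?_)
    ((hmem g).mpr hg)
  · rw [hmem] at hv ⊢
    rw [← hS, hSu, hv]
  · obtain ⟨f, hf, rfl, hPf⟩ := exists_eigenfunction_of_symmetrizedOp hπ hv0 hSv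
    refine hM ⟨f, hf, ?_, hPf⟩
    rw [hmem, inner_weightedEmbed fun x => (hπ x).le] at hv
    simpa using hv

noncomputable def killOn (A : Finset Ω) : EuclideanSpace ℝ Ω →ₗ[ℝ] EuclideanSpace ℝ Ω :=
  Matrix.toEuclideanLin (Matrix.diagonal fun x => if x ∈ A then 0 else 1)

theorem killOn_apply (A : Finset Ω) (v : EuclideanSpace ℝ Ω) (x : Ω) :
    killOn A v x = if x ∈ A then 0 else v x := by
  simp [killOn, Matrix.toLpLin_apply, mulVec_diagonal]

theorem isSymmetricProjection_killOn (A : Finset Ω) : (killOn A).IsSymmetricProjection where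
  isIdempotentElem := by
    refine LinearMap.ext fun v => ?_
    ext x
    simp only [Module.End.mul_apply, killOn_apply]
    split_ifs <;> rfl
  isSymmetric := Matrix.isSymmetric_toEuclideanLin_iff.mpr (Matrix.isHermitian_diagonal _)

theorem killOn_weightedEmbed (A : Finset Ω) (π f : Ω → ℝ) :
    killOn A (weightedEmbed π f) = weightedEmbed π fun x => if x ∈ A then 0 else f x := by
  ext x
  simp only [killOn_apply, weightedEmbed_apply]
  split_ifs <;> simp

theorem norm_sq_killOn_weightedEmbed_one {π : Ω → ℝ} (hπ : ∀ x, 0 ≤ π x)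
    (hπ1 : ∑ x, π x = 1) (A : Finset Ω) :
    ‖killOn A (weightedEmbed π 1)‖ ^ 2 = 1 - ∑ a ∈ A, π a := by
  have h : ∀ x, π x * (if x ∈ A then 0 else 1) * (if x ∈ A then 0 else 1) =
      π x - if x ∈ A then π x else 0 := fun x => by split_ifs <;> ring
  rw [← real_inner_self_eq_norm_sq, killOn_weightedEmbed, inner_weightedEmbed hπ]
  simp only [Pi.one_apply, h, sum_sub_distrib, sum_ite_mem, univ_inter, hπ1]

theorem abs_inner_symmetrizedOp_le {P : Matrix Ω Ω ℝ} {π : Ω → ℝ} (hP1 : ∀ x, ∑ y, P x y = 1)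
    (hπ : ∀ x, 0 < π x) (hπ1 : ∑ x, π x = 1) (hrev : ∀ x y, π x * P x y = π y * P y x)
    {lam2 lamMin lam : ℝ}
    (hlam2 : lam2 ∈ upperBounds {r : ℝ | ∃ f : Ω → ℝ, f ≠ 0 ∧ (∑ v, π v * f v) = 0 ∧
      P *ᵥ f = r • f})
    (hlamMin : lamMin ∈ lowerBounds {r : ℝ | ∃ f : Ω → ℝ, f ≠ 0 ∧ P *ᵥ f = r • f})
    (h2 : lam2 ≤ lam) (hmin : |lamMin| ≤ lam) (hlam1 : lam ≤ 1)
    {A : Finset Ω} {w : EuclideanSpace ℝ Ω} (hw : killOn A w = w) :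
    |⟪symmetrizedOp P π w, w⟫| ≤ (1 - (1 - lam) * ∑ a ∈ A, π a) * ‖w‖ ^ 2 := by
  have hπ' : ∀ x, 0 ≤ π x := fun x => (hπ x).le
  have hπA : 0 ≤ ∑ a ∈ A, π a := sum_nonneg fun x _ => hπ' x
  have hπA1 : ∑ a ∈ A, π a ≤ 1 := hπ1 ▸ sum_le_univ_sum_of_nonneg hπ'
  have hc : ⟪weightedEmbed π 1, w⟫ ^ 2 ≤ (1 - ∑ a ∈ A, π a) * ‖w‖ ^ 2 := by
    rw [← hw, ← (isSymmetricProjection_killOn A).isSymmetric, sq,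
      ← norm_sq_killOn_weightedEmbed_one hπ' hπ1 A, hw, ← real_inner_self_eq_norm_sq,
      ← real_inner_self_eq_norm_sq]
    exact real_inner_mul_inner_self_le _ _
  have hup := inner_symmetrizedOp_le hP1 hπ hπ1 hrev hlam2 w
  have hlow := mul_norm_sq_le_inner_symmetrizedOp hπ hrev hlamMin w
  have hw2 : 0 ≤ ‖w‖ ^ 2 := by positivity
  rw [abs_le]
  constructor
  · have hlamMin' : 0 ≤ lamMin + lam := by linarith [neg_abs_le lamMin]
    linarith [mul_nonneg hlamMin' hw2,
      mul_nonneg (mul_nonneg (sub_nonneg.2 hlam1) (sub_nonneg.2 hπA1)) hw2]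
  · linarith [mul_le_mul_of_nonneg_left hc (sub_nonneg.2 (h2.trans hlam1)),
      mul_nonneg (mul_nonneg (sub_nonneg.2 h2) hπA) hw2]

theorem survSet_of_mem {P : Matrix Ω Ω ℝ} {A : Finset Ω} {x : Ω} (hx : x ∈ A) (t : ℕ) :
    survSet P A t x = 0 := by
  cases t <;> simp [survSet, hx]

theorem killOn_weightedEmbed_survSet (π : Ω → ℝ) (P : Matrix Ω Ω ℝ) (A : Finset Ω) (t : ℕ) :
    killOn A (weightedEmbed π (survSet P A t)) = weightedEmbed π (survSet P A t) := by
  rw [killOn_weightedEmbed]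
  congr 1
  ext x
  split_ifs with hx
  exacts [(survSet_of_mem hx t).symm, rfl]

theorem weightedEmbed_survSet_zero (π : Ω → ℝ) (P : Matrix Ω Ω ℝ) (A : Finset Ω) :
    weightedEmbed π (survSet P A 0) = killOn A (weightedEmbed π 1) := by
  rw [killOn_weightedEmbed]
  rfl

theorem weightedEmbed_survSet_succ {π : Ω → ℝ} (hπ : ∀ x, 0 < π x) (P : Matrix Ω Ω ℝ)
    (A : Finset Ω) (t : ℕ) :
    weightedEmbed π (survSet P A (t + 1)) =
      killOn A (symmetrizedOp P π (weightedEmbed π (survSet P A t))) := by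
  rw [symmetrizedOp_weightedEmbed hπ, killOn_weightedEmbed]
  rfl

theorem sum_mul_survSet_le {P : Matrix Ω Ω ℝ} {π : Ω → ℝ} (hπ : ∀ x, 0 < π x)
    (hπ1 : ∑ x, π x = 1) (hrev : ∀ x y, π x * P x y = π y * P y x) {A : Finset Ω} {β : ℝ}
    (hβ : 0 ≤ β) (hcontr : ∀ w, killOn A w = w → |⟪symmetrizedOp P π w, w⟫| ≤ β * ‖w‖ ^ 2)
    (t : ℕ) : ∑ x, π x * survSet P A t x ≤ (1 - ∑ a ∈ A, π a) * β ^ t := by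
  set Q := killOn A
  set u := weightedEmbed π 1
  have hQ := isSymmetricProjection_killOn A
  have hdecay : ∀ t, ‖weightedEmbed π (survSet P A t)‖ ≤ β ^ t * ‖Q u‖ := by
    intro t
    induction t with
    | zero => simp [Q, u, weightedEmbed_survSet_zero]
    | succ t ih =>
      rw [weightedEmbed_survSet_succ hπ, pow_succ', mul_assoc]
      refine ((isSymmetric_symmetrizedOp hπ hrev).norm_compression_apply_le hQ hβ hcontr
        (killOn_weightedEmbed_survSet π P A t)).trans ?_
      gcongr
  calc ∑ x, π x * survSet P A t x = ⟪Q u, weightedEmbed π (survSet P A t)⟫ := by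
        rw [hQ.isSymmetric, killOn_weightedEmbed_survSet, inner_weightedEmbed fun x => (hπ x).le]
        simp
    _ ≤ ‖Q u‖ * ‖weightedEmbed π (survSet P A t)‖ := real_inner_le_norm _ _
    _ ≤ ‖Q u‖ * (β ^ t * ‖Q u‖) := by gcongr; exact hdecay t
    _ = (1 - ∑ a ∈ A, π a) * β ^ t := by
        rw [← norm_sq_killOn_weightedEmbed_one (fun x => (hπ x).le) hπ1 A]
        ring

end ReversibleChain

theorem stmt6_general {Ω : Type*} [Fintype Ω] [DecidableEq Ω]
    (P : Matrix Ω Ω ℝ) (π : Ω → ℝ)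
    (hP0 : ∀ x y, 0 ≤ P x y) (hP1 : ∀ x, ∑ y, P x y = 1)
    (hπ0 : ∀ x, 0 < π x) (hπ1 : ∑ x, π x = 1)
    (hrev : ∀ x y, π x * P x y = π y * P y x)
    (lam2 lamMin : ℝ)
    (hlam2 : IsGreatest {r : ℝ | ∃ f : Ω → ℝ, f ≠ 0 ∧ (∑ v, π v * f v) = 0 ∧
      P.mulVec f = r • f} lam2)
    (hlamMin : IsLeast {r : ℝ | ∃ f : Ω → ℝ, f ≠ 0 ∧ P.mulVec f = r • f} lamMin)
    (A : Finset Ω) (t : ℕ) :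
    ∑ x, π x * survSet P A t x ≤
      (1 - ∑ a ∈ A, π a) *
        Real.exp (-(t : ℝ) * (∑ a ∈ A, π a) / (1 - max lam2 |lamMin|)⁻¹) := by
  set πA := ∑ a ∈ A, π a
  set lam := max lam2 |lamMin|
  have hlam1 : lam ≤ 1 := by
    obtain ⟨⟨f, hf, -, hPf⟩, -⟩ := hlam2
    obtain ⟨⟨g, hg, hPg⟩, -⟩ := hlamMin
    exact max_le (le_of_abs_le (abs_le_one_of_mulVec_eq_smul hP0 hP1 hf hPf))
      (abs_le_one_of_mulVec_eq_smul hP0 hP1 hg hPg)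
  have hπA : 0 ≤ πA := sum_nonneg fun x _ => (hπ0 x).le
  have hπA1 : πA ≤ 1 := hπ1 ▸ sum_le_univ_sum_of_nonneg fun x => (hπ0 x).le
  have hβ : 0 ≤ 1 - (1 - lam) * πA := by
    linarith [mul_nonneg (sub_nonneg.2 hlam1) (sub_nonneg.2 hπA1), abs_nonneg lamMin,
      le_max_right lam2 |lamMin|]
  calc ∑ x, π x * survSet P A t x ≤ (1 - πA) * (1 - (1 - lam) * πA) ^ t :=
        sum_mul_survSet_le hπ0 hπ1 hrev hβ (fun w hw => abs_inner_symmetrizedOp_le hP1 hπ0 hπ1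
          hrev hlam2.2 hlamMin.2 (le_max_left _ _) (le_max_right _ _) hlam1 hw) t
    _ ≤ (1 - πA) * Real.exp (-(1 - lam) * πA) ^ t := by
        gcongr
        linarith [Real.add_one_le_exp (-(1 - lam) * πA)]
    _ = (1 - πA) * Real.exp (-(t : ℝ) * πA / (1 - lam)⁻¹) := by
        rw [← Real.exp_nat_mul, div_inv_eq_mul]
        ring_nf

/-- For a finite irreducible reversible Markov chain with
relaxation time `t_rel = (1 - max(λ₂, |λ_min|))⁻¹` and a nonempty set `A ⊆ Ω`,
for all `t ≥ 0`: `P_π[T_A > t] ≤ (1 - π(A))·exp(-t·π(A)/t_rel)`. -/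
theorem stmt6 {Ω : Type*} [Fintype Ω] [Nonempty Ω] [DecidableEq Ω]
    (P : Matrix Ω Ω ℝ) (π : Ω → ℝ)
    (hP0 : ∀ x y, 0 ≤ P x y) (hP1 : ∀ x, ∑ y, P x y = 1)
    (hπ0 : ∀ x, 0 < π x) (hπ1 : ∑ x, π x = 1)
    (hrev : ∀ x y, π x * P x y = π y * P y x)
    (hirr : ∀ x y, ∃ t : ℕ, 0 < (P ^ t) x y)
    (lam2 lamMin : ℝ)
    (hlam2 : IsGreatest {r : ℝ | ∃ f : Ω → ℝ, f ≠ 0 ∧ (∑ v, π v * f v) = 0 ∧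
      P.mulVec f = r • f} lam2)
    (hlamMin : IsLeast {r : ℝ | ∃ f : Ω → ℝ, f ≠ 0 ∧ P.mulVec f = r • f} lamMin)
    (A : Finset Ω) (hA : A.Nonempty) (t : ℕ) :
    ∑ x, π x * survSet P A t x ≤
      (1 - ∑ a ∈ A, π a) *
        Real.exp (-(t : ℝ) * (∑ a ∈ A, π a) / (1 - max lam2 |lamMin|)⁻¹) :=
  stmt6_general P π hP0 hP1 hπ0 hπ1 hrev lam2 lamMin hlam2 hlamMin A t
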